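/- Let D be a smooth distribution on X spanned in adapted coordinates by e_a = ∂_a - Γⁿ_a ∂_n, and let g be a metric on D with components g_{ab} = g(e_a, e_b). Then the Christoffel symbols Γ^a_{bc} = ½ g^{ad}(e_b g_{cd} + e_c g_{bd} - e_d g_{bc}) define the unique intrinsic connection ∇ : ΓD × ΓD → ΓD that is metric (Z g(X,Y) = g(∇_Z X, Y) + g(X, ∇_Z Y) for X,Y,Z ∈ ΓD) and torsion-free (∇_X Y - ∇_Y X - p[X,Y] = 0, where p : TX → D is the projection), on directions tangent to D. -/

import Mathlib

/-!
A connection is determined by its values on pairs of frame vectors, because the difference of two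
connections is tensorial; conversely, any prescribed frame values extend, by the Leibniz rule in
frame coordinates, to a connection (the invertible Gram matrix makes the frame a basis). The
failures of metricity and of torsion-freeness are tensorial as well, so it suffices to check them
on the frame: there metricity is the Koszul identity, and torsion-freeness is the symmetry of
`Γ^a_{bc}` in `b, c` together with `p[e_b, e_c] = 0`.
-/

open Finset Module

section Frame

variable {R V M ι : Type*} [CommRing R] [AddCommGroup V] [Module R V]

theorem Module.Basis.eq_zero_of_additive_of_smul [AddCommGroup M] [Module R M] (b : Basis ι R V)
    {f : V → M} (hadd : ∀ X Y, f (X + Y) = f X + f Y) (hsmul : ∀ (r : R) X, f (r • X) = r • f X)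
    (hb : ∀ i, f (b i) = 0) (X : V) : f X = 0 :=
  let F : V →ₗ[R] M := { toFun := f, map_add' := hadd, map_smul' := hsmul }
  LinearMap.congr_fun (b.ext (f₁ := F) (f₂ := 0) hb) X

theorem linearIndependent_of_gram_left_inv [Fintype ι] [DecidableEq ι]
    (B : LinearMap.BilinForm R V) {e : ι → V} {Ginv : ι → ι → R}
    (hGinv : ∀ a c, ∑ d, Ginv a d * B (e d) (e c) = if a = c then 1 else 0) :
    LinearIndependent R e := by
  refine Fintype.linearIndependent_iff.2 fun f hf a => ?_
  calc f a = ∑ d, f d * ∑ c, Ginv a c * B (e c) (e d) := by simp [hGinv, mul_ite]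
    _ = ∑ c, Ginv a c * B (e c) (∑ d, f d • e d) := by
        simp only [map_sum, map_smul, smul_eq_mul, mul_sum]
        rw [sum_comm]
        exact sum_congr rfl fun _ _ => sum_congr rfl fun _ _ => by ring
    _ = 0 := by simp [hf]

end Frame

section Connection

variable {R V ι : Type*} [CommRing R] [AddCommGroup V] [Module R V]

structure IsAnchor (act : V → R → R) : Prop where
  smul_left : ∀ (f : R) (X : V) (r : R), act (f • X) r = f * act X r
  add_left : ∀ (X Y : V) (r : R), act (X + Y) r = act X r + act Y r
  add_right : ∀ (X : V) (r s : R), act X (r + s) = act X r + act X s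
  mul_right : ∀ (X : V) (r s : R), act X (r * s) = act X r * s + r * act X s

structure IsConnection (act : V → R → R) (nabla : V → V → V) : Prop where
  smul_left : ∀ (f : R) (X Y : V), nabla (f • X) Y = f • nabla X Y
  add_left : ∀ X Y Z : V, nabla (X + Y) Z = nabla X Z + nabla Y Z
  add_right : ∀ X Y Z : V, nabla X (Y + Z) = nabla X Y + nabla X Z
  smul_right : ∀ (f : R) (X Y : V), nabla X (f • Y) = f • nabla X Y + act X f • Y

variable {act : V → R → R}

theorem IsAnchor.map_zero_right (hact : IsAnchor act) (X : V) : act X 0 = 0 := by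
  simpa using hact.add_right X 0 0

theorem IsAnchor.map_one_right (hact : IsAnchor act) (X : V) : act X 1 = 0 := by
  simpa using hact.mul_right X 1 1

theorem IsConnection.ext_basis {N₁ N₂ : V → V → V} (h₁ : IsConnection act N₁)
    (h₂ : IsConnection act N₂) (b : Basis ι R V) (hb : ∀ i j, N₁ (b i) (b j) = N₂ (b i) (b j)) :
    N₁ = N₂ := by
  -- the difference of two connections is tensorial: the `act` terms cancel
  have hbasis : ∀ X j, N₁ X (b j) - N₂ X (b j) = 0 := fun X j =>
    b.eq_zero_of_additive_of_smul (f := fun X => N₁ X (b j) - N₂ X (b j))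
      (fun X Y => by simp only [h₁.add_left, h₂.add_left]; abel)
      (fun r X => by simp only [h₁.smul_left, h₂.smul_left, smul_sub])
      (fun i => sub_eq_zero.2 (hb i j)) X
  funext X Y
  refine sub_eq_zero.1 (b.eq_zero_of_additive_of_smul (f := fun Y => N₁ X Y - N₂ X Y)
    (fun Y Z => by simp only [h₁.add_right, h₂.add_right]; abel)
    (fun r Y => by simp only [h₁.smul_right, h₂.smul_right]; rw [smul_sub]; abel)
    (hbasis X) Y)

theorem IsConnection.metric_of_basis (hact : IsAnchor act) {N : V → V → V}
    (hN : IsConnection act N) (B : LinearMap.BilinForm R V) (b : Basis ι R V)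
    (hb : ∀ i j k, act (b i) (B (b j) (b k)) = B (N (b i) (b j)) (b k) + B (b j) (N (b i) (b k)))
    (X Y Z : V) : act Z (B X Y) = B (N Z X) Y + B X (N Z Y) := by
  let T : V → V → V → R := fun Z X Y => B (N Z X) Y + B X (N Z Y) - act Z (B X Y)
  have hZXbasis : ∀ i j Y, T (b i) (b j) Y = 0 := fun i j =>
    b.eq_zero_of_additive_of_smul (f := T (b i) (b j))
      (fun Y Y' => by simp only [T, hN.add_right, map_add, hact.add_right]; ring)
      (fun r Y => by
        simp only [T, hN.smul_right, map_smul, map_add, smul_eq_mul, hact.mul_right]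
        ring)
      (fun k => sub_eq_zero.2 (hb i j k).symm)
  have hZbasis : ∀ i X Y, T (b i) X Y = 0 := fun i X Y =>
    b.eq_zero_of_additive_of_smul (f := fun X => T (b i) X Y)
      (fun X X' => by
        simp only [T, hN.add_right, map_add, LinearMap.add_apply, hact.add_right]
        ring)
      (fun r X => by
        simp only [T, hN.smul_right, map_smul, map_add, LinearMap.smul_apply, LinearMap.add_apply,
          smul_eq_mul, hact.mul_right]
        ring)
      (fun j => hZXbasis i j Y) X
  have hT : T Z X Y = 0 :=
    b.eq_zero_of_additive_of_smul (f := fun Z => T Z X Y)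
      (fun Z Z' => by simp only [T, hN.add_left, map_add, LinearMap.add_apply, hact.add_left]; ring)
      (fun r Z => by
        simp only [T, hN.smul_left, map_smul, LinearMap.smul_apply, smul_eq_mul, hact.smul_left]
        ring)
      (fun i => hZbasis i X Y) Z
  exact (sub_eq_zero.1 hT).symm

theorem IsConnection.torsion_eq_zero_of_basis {N : V → V → V} (hN : IsConnection act N)
    {pbr : V → V → V} (hpbr_anti : ∀ X Y, pbr X Y = -pbr Y X)
    (hpbr_add : ∀ X Y Z, pbr (X + Y) Z = pbr X Z + pbr Y Z)
    (hpbr_leib : ∀ (f : R) X Y, pbr (f • X) Y = f • pbr X Y - act Y f • X) (b : Basis ι R V)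
    (hb : ∀ i j, N (b i) (b j) - N (b j) (b i) - pbr (b i) (b j) = 0) (X Y : V) :
    N X Y - N Y X - pbr X Y = 0 := by
  let S : V → V → V := fun X Y => N X Y - N Y X - pbr X Y
  have hS_add : ∀ Y X X', S (X + X') Y = S X Y + S X' Y := fun Y X X' => by
    simp only [S, hN.add_left, hN.add_right, hpbr_add]; abel
  have hS_smul : ∀ Y (r : R) X, S (r • X) Y = r • S X Y := fun Y r X => by
    simp only [S, hN.smul_left, hN.smul_right, hpbr_leib, smul_sub]; abel
  have hS_anti : ∀ X Y, S X Y = -S Y X := fun X Y => by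
    simp only [S]; rw [hpbr_anti X Y]; abel
  have hS_basis : ∀ X j, S X (b j) = 0 := fun X j =>
    b.eq_zero_of_additive_of_smul (f := fun X => S X (b j)) (hS_add (b j)) (hS_smul (b j))
      (fun i => hb i j) X
  exact b.eq_zero_of_additive_of_smul (f := fun X => S X Y) (hS_add Y) (hS_smul Y)
    (fun i => by rw [hS_anti, hS_basis, neg_zero]) X

variable [Fintype ι]

noncomputable def Module.Basis.connection (b : Basis ι R V) (act : V → R → R) (Γ : ι → ι → V)
    (X Y : V) : V :=
  ∑ j, (act X (b.repr Y j) • b j + b.repr Y j • ∑ i, b.repr X i • Γ i j)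

theorem Module.Basis.isConnection_connection (hact : IsAnchor act) (b : Basis ι R V)
    (Γ : ι → ι → V) : IsConnection act (b.connection act Γ) where
  smul_left f X Y := by
    simp only [Module.Basis.connection, hact.smul_left, map_smul, Finsupp.smul_apply, smul_eq_mul,
      smul_sum, smul_add, mul_smul]
    exact sum_congr rfl fun j _ => by congr 1; exact sum_congr rfl fun i _ => smul_comm _ _ _
  add_left X Y Z := by
    simp only [Module.Basis.connection, hact.add_left, map_add, Finsupp.add_apply, add_smul,
      smul_add, sum_add_distrib]
    abel
  add_right X Y Z := by
    simp only [Module.Basis.connection, hact.add_right, map_add, Finsupp.add_apply, add_smul,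
      sum_add_distrib]
    abel
  smul_right f X Y := by
    have hrepr : ∑ j, act X f • b.repr Y j • b j = act X f • Y := by
      rw [← smul_sum, b.sum_repr]
    simp only [Module.Basis.connection, map_smul, Finsupp.smul_apply, smul_eq_mul, hact.mul_right,
      add_smul, sum_add_distrib, hrepr, smul_sum, smul_add, mul_smul]
    abel

theorem Module.Basis.connection_apply_basis (hact : IsAnchor act) (b : Basis ι R V)
    (Γ : ι → ι → V) (i j : ι) : b.connection act Γ (b i) (b j) = Γ i j := by
  classical
  simp [Module.Basis.connection, Finsupp.single_apply, apply_ite (act (b i)), hact.map_zero_right,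
    hact.map_one_right]

end Connection

theorem sum_mul_eq_ite_comm {R ι : Type*} [CommRing R] [Fintype ι] [DecidableEq ι]
    {A B : ι → ι → R} (h : ∀ a c, ∑ d, A a d * B d c = if a = c then 1 else 0) (a c : ι) :
    ∑ d, B a d * A d c = if a = c then 1 else 0 := by
  have hAB : Matrix.of A * Matrix.of B = 1 := by
    ext a c
    simpa [Matrix.mul_apply, Matrix.one_apply] using h a c
  have hBA : Matrix.of B * Matrix.of A = 1 := mul_eq_one_comm.1 hAB
  simpa [Matrix.mul_apply, Matrix.one_apply] using congrFun₂ hBA a c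

section Christoffel

variable {R V ι : Type*} [CommRing R]

def koszul (act : V → R → R) (e : ι → V) (G : ι → ι → R) (b c d : ι) : R :=
  act (e b) (G c d) + act (e c) (G b d) - act (e d) (G b c)

theorem half_mul_koszul_add_half_mul_koszul {act : V → R → R} {e : ι → V} {G : ι → ι → R}
    {half : R} (hG : ∀ a c, G a c = G c a) (hhalf : half + half = 1) (a b c : ι) :
    half * koszul act e G a b c + half * koszul act e G a c b = act (e a) (G b c) := by
  simp only [koszul, hG c b]
  linear_combination act (e a) (G b c) * hhalf

variable [Fintype ι]

def christoffel (act : V → R → R) (e : ι → V) (G Ginv : ι → ι → R) (half : R) (a b c : ι) : R :=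
  half * ∑ d, Ginv a d * koszul act e G b c d

variable {act : V → R → R} {e : ι → V} {G Ginv : ι → ι → R} {half : R}

theorem christoffel_comm (hG : ∀ a c, G a c = G c a) (a b c : ι) :
    christoffel act e G Ginv half a b c = christoffel act e G Ginv half a c b := by
  simp only [christoffel, koszul, hG c b, add_comm (act (e b) _)]

theorem sum_christoffel_mul [DecidableEq ι] (hG : ∀ a c, G a c = G c a)
    (hGinv : ∀ a c, ∑ d, Ginv a d * G d c = if a = c then 1 else 0) (b c d : ι) :
    ∑ a, christoffel act e G Ginv half a b c * G a d = half * koszul act e G b c d := by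
  have hGG := sum_mul_eq_ite_comm hGinv
  calc ∑ a, christoffel act e G Ginv half a b c * G a d
      = half * ∑ x, (∑ a, G d a * Ginv a x) * koszul act e G b c x := by
        simp only [christoffel, mul_sum, sum_mul, hG _ d]
        rw [sum_comm]
        exact sum_congr rfl fun _ _ => sum_congr rfl fun _ _ => by ring
    _ = half * koszul act e G b c d := by simp [hGG]

variable [AddCommGroup V] [Module R V]

theorem apply_sum_christoffel_smul [DecidableEq ι] {B : LinearMap.BilinForm R V}
    (hB : B.IsSymm) (hG : ∀ a c, G a c = B (e a) (e c))
    (hGinv : ∀ a c, ∑ d, Ginv a d * G d c = if a = c then 1 else 0) (b c d : ι) :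
    B (∑ a, christoffel act e G Ginv half a b c • e a) (e d) = half * koszul act e G b c d := by
  have hGsymm : ∀ a c, G a c = G c a := fun a c => by rw [hG, hG, hB.eq]
  simp only [map_sum, map_smul, LinearMap.sum_apply, LinearMap.smul_apply, smul_eq_mul, ← hG]
  exact sum_christoffel_mul hGsymm hGinv b c d

noncomputable def Module.Basis.leviCivita (b : Basis ι R V) (act : V → R → R)
    (G Ginv : ι → ι → R) (half : R) : V → V → V :=
  b.connection act fun j k => ∑ i, christoffel act b G Ginv half i j k • b i

theorem Module.Basis.isConnection_leviCivita (hact : IsAnchor act) (b : Basis ι R V) :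
    IsConnection act (b.leviCivita act G Ginv half) :=
  b.isConnection_connection hact _

theorem Module.Basis.leviCivita_apply_basis (hact : IsAnchor act) (b : Basis ι R V) (j k : ι) :
    b.leviCivita act G Ginv half (b j) (b k) = ∑ i, christoffel act b G Ginv half i j k • b i :=
  b.connection_apply_basis hact _ j k

theorem Module.Basis.leviCivita_metric [DecidableEq ι] (hact : IsAnchor act)
    {B : LinearMap.BilinForm R V} (hB : B.IsSymm) (b : Basis ι R V)
    (hG : ∀ a c, G a c = B (b a) (b c))
    (hGinv : ∀ a c, ∑ d, Ginv a d * G d c = if a = c then 1 else 0) (hhalf : half + half = 1)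
    (X Y Z : V) :
    act Z (B X Y) =
      B (b.leviCivita act G Ginv half Z X) Y + B X (b.leviCivita act G Ginv half Z Y) :=
  (b.isConnection_leviCivita hact).metric_of_basis hact B b (fun i j k => by
    have hGsymm : ∀ a c, G a c = G c a := fun a c => by rw [hG, hG, hB.eq]
    rw [← hG j k, b.leviCivita_apply_basis hact, b.leviCivita_apply_basis hact, hB.eq (b j),
      apply_sum_christoffel_smul hB hG hGinv, apply_sum_christoffel_smul hB hG hGinv,
      half_mul_koszul_add_half_mul_koszul hGsymm hhalf]) X Y Z

theorem Module.Basis.leviCivita_torsion_eq_zero (hact : IsAnchor act) (b : Basis ι R V)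
    (hG : ∀ a c, G a c = G c a) {pbr : V → V → V} (hpbr_anti : ∀ X Y, pbr X Y = -pbr Y X)
    (hpbr_add : ∀ X Y Z, pbr (X + Y) Z = pbr X Z + pbr Y Z)
    (hpbr_leib : ∀ (f : R) X Y, pbr (f • X) Y = f • pbr X Y - act Y f • X)
    (hpbr_basis : ∀ i j, pbr (b i) (b j) = 0) (X Y : V) :
    b.leviCivita act G Ginv half X Y - b.leviCivita act G Ginv half Y X - pbr X Y = 0 :=
  (b.isConnection_leviCivita hact).torsion_eq_zero_of_basis hpbr_anti hpbr_add hpbr_leib b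
    (fun i j => by
      simp only [b.leviCivita_apply_basis hact, christoffel_comm hG _ i j, hpbr_basis, sub_self])
    X Y

end Christoffel

/-- `V` models the sections of `D` as a module over the ring `R` of smooth functions, `act X r`
is the derivative of `r` along `X`, and `pbr X Y` is the projected bracket `p[X, Y]`. -/
theorem stmt_10_general {R V ι : Type*} [CommRing R] [Algebra ℝ R]
    [AddCommGroup V] [Module R V] [Fintype ι] [DecidableEq ι]
    (act : V → R → R)
    (hact_smul : ∀ (f : R) (X : V) (r : R), act (f • X) r = f * act X r)
    (hact_addX : ∀ (X Y : V) (r : R), act (X + Y) r = act X r + act Y r)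
    (hact_add : ∀ X r s, act X (r + s) = act X r + act X s)
    (hact_mul : ∀ X r s, act X (r * s) = act X r * s + r * act X s)
    (g : V → V → R) (hgsym : ∀ X Y, g X Y = g Y X)
    (hg_addl : ∀ X Y Z, g (X + Y) Z = g X Z + g Y Z)
    (hg_smull : ∀ (f : R) X Y, g (f • X) Y = f * g X Y)
    (pbr : V → V → V) (hpbr_anti : ∀ X Y, pbr X Y = -pbr Y X)
    (hpbr_addl : ∀ X Y Z, pbr (X + Y) Z = pbr X Z + pbr Y Z)
    (hpbr_leib : ∀ (f : R) X Y, pbr (f • X) Y = f • pbr X Y - act Y f • X)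
    (e : ι → V)
    (hspan : ∀ X : V, ∃ f : ι → R, X = ∑ a, f a • e a)
    (hbr_e : ∀ b c, pbr (e b) (e c) = 0)
    (G : ι → ι → R) (hG : ∀ a b, G a b = g (e a) (e b))
    (Ginv : ι → ι → R)
    (hGinv : ∀ a b, (∑ d, Ginv a d * G d b) = if a = b then 1 else 0) :
    ∃! nabla : V → V → V,
      (∀ (f : R) (X Y : V), nabla (f • X) Y = f • nabla X Y) ∧
      (∀ (X Y Z : V), nabla (X + Y) Z = nabla X Z + nabla Y Z) ∧
      (∀ (X Y Z : V), nabla X (Y + Z) = nabla X Y + nabla X Z) ∧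
      (∀ (f : R) (X Y : V), nabla X (f • Y) = f • nabla X Y + act X f • Y) ∧
      (∀ X Y Z, act Z (g X Y) = g (nabla Z X) Y + g X (nabla Z Y)) ∧
      (∀ X Y, nabla X Y - nabla Y X - pbr X Y = 0) ∧
      (∀ b c, nabla (e b) (e c) =
        ∑ a, (algebraMap ℝ R (1 / 2) *
          ∑ d, Ginv a d * (act (e b) (G c d) + act (e c) (G b d) - act (e d) (G b c)))
          • e a) := by
  let B : LinearMap.BilinForm R V := LinearMap.mk₂ R g hg_addl hg_smull
    (fun X Y Z => by rw [hgsym, hg_addl, hgsym Y, hgsym Z])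
    (fun f X Y => by rw [hgsym, hg_smull, hgsym, smul_eq_mul])
  have hB : B.IsSymm := ⟨hgsym⟩
  have hGinv' : ∀ a c, ∑ d, Ginv a d * B (e d) (e c) = if a = c then 1 else 0 := fun a c => by
    simpa only [B, LinearMap.mk₂_apply, hG] using hGinv a c
  obtain ⟨b, rfl⟩ : ∃ b : Basis ι R V, ⇑b = e :=
    ⟨Basis.mk (linearIndependent_of_gram_left_inv B hGinv') fun X _ =>
      (Submodule.mem_span_range_iff_exists_fun R).2 ((hspan X).imp fun _ h => h.symm),
      Basis.coe_mk _ _⟩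
  have hact : IsAnchor act := ⟨hact_smul, hact_addX, hact_add, hact_mul⟩
  have hhalf : algebraMap ℝ R (1 / 2) + algebraMap ℝ R (1 / 2) = 1 := by
    rw [← map_add]; norm_num
  have hGsymm : ∀ a c, G a c = G c a := fun a c => by rw [hG, hG, hgsym]
  have hN := b.isConnection_leviCivita (G := G) (Ginv := Ginv)
    (half := algebraMap ℝ R (1 / 2)) hact
  refine ⟨_, ⟨hN.smul_left, hN.add_left, hN.add_right, hN.smul_right,
    b.leviCivita_metric hact hB hG hGinv hhalf,
    b.leviCivita_torsion_eq_zero hact hGsymm hpbr_anti hpbr_addl hpbr_leib hbr_e,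
    b.leviCivita_apply_basis hact⟩, ?_⟩
  rintro N ⟨h_smul_left, h_add_left, h_add_right, h_smul_right, -, -, h_basis⟩
  exact IsConnection.ext_basis ⟨h_smul_left, h_add_left, h_add_right, h_smul_right⟩ hN b
    fun j k => (h_basis j k).trans (b.leviCivita_apply_basis hact j k).symm

/-- Algebraic model of an intrinsic connection on a distribution `D`: the module `V`
of admissible vector fields over the ring `R` of smooth functions, with each field
acting on functions as a derivation (`act`), a projected bracket `pbr X Y = p[X,Y]`,
a fiber metric `g`, and an adapted frame `e_a` with `p[e_a, e_b] = 0`.  The Christoffel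
symbols `Γ^a_{bc} = ½ g^{ad}(e_b g_{cd} + e_c g_{bd} - e_d g_{bc})` define the unique
intrinsic connection that is metric and torsion-free. -/
theorem stmt_10 {R V ι : Type*} [CommRing R] [Algebra ℝ R]
    [AddCommGroup V] [Module R V] [Fintype ι] [DecidableEq ι]
    (act : V → R → R)
    (hact_smul : ∀ (f : R) (X : V) (r : R), act (f • X) r = f * act X r)
    (hact_addX : ∀ (X Y : V) (r : R), act (X + Y) r = act X r + act Y r)
    (hact_add : ∀ X r s, act X (r + s) = act X r + act X s)
    (hact_mul : ∀ X r s, act X (r * s) = act X r * s + r * act X s)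
    (g : V → V → R) (hgsym : ∀ X Y, g X Y = g Y X)
    (hg_addl : ∀ X Y Z, g (X + Y) Z = g X Z + g Y Z)
    (hg_smull : ∀ (f : R) X Y, g (f • X) Y = f * g X Y)
    (hg_nd : ∀ X, (∀ Y, g X Y = 0) → X = 0)
    (pbr : V → V → V) (hpbr_anti : ∀ X Y, pbr X Y = -pbr Y X)
    (hpbr_addl : ∀ X Y Z, pbr (X + Y) Z = pbr X Z + pbr Y Z)
    (hpbr_leib : ∀ (f : R) X Y, pbr (f • X) Y = f • pbr X Y - act Y f • X)
    (e : ι → V)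
    (hspan : ∀ X : V, ∃ f : ι → R, X = ∑ a, f a • e a)
    (hbr_e : ∀ b c, pbr (e b) (e c) = 0)
    (G : ι → ι → R) (hG : ∀ a b, G a b = g (e a) (e b))
    (Ginv : ι → ι → R)
    (hGinv : ∀ a b, (∑ d, Ginv a d * G d b) = if a = b then 1 else 0) :
    ∃! nabla : V → V → V,
      (∀ (f : R) (X Y : V), nabla (f • X) Y = f • nabla X Y) ∧
      (∀ (X Y Z : V), nabla (X + Y) Z = nabla X Z + nabla Y Z) ∧
      (∀ (X Y Z : V), nabla X (Y + Z) = nabla X Y + nabla X Z) ∧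
      (∀ (f : R) (X Y : V), nabla X (f • Y) = f • nabla X Y + act X f • Y) ∧
      (∀ X Y Z, act Z (g X Y) = g (nabla Z X) Y + g X (nabla Z Y)) ∧
      (∀ X Y, nabla X Y - nabla Y X - pbr X Y = 0) ∧
      (∀ b c, nabla (e b) (e c) =
        ∑ a, (algebraMap ℝ R (1 / 2) *
          ∑ d, Ginv a d * (act (e b) (G c d) + act (e c) (G b d) - act (e d) (G b c)))
          • e a) :=
  stmt_10_general act hact_smul hact_addX hact_add hact_mul g hgsym hg_addl hg_smull pbr hpbr_anti
    hpbr_addl hpbr_leib e hspan hbr_e G hG Ginv hGinv
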